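/- arXiv:1411.3223 — 7 statements merged into one kernel-verified Lean document; each statement's English description precedes it below -/
import Mathlib

section
/- Let f : ℚ/ℤ → ℚ/ℤ be a homomorphism of additive groups whose kernel is finite, and let m be the cardinality of the kernel of f. Then m ≥ 1 and there exists an automorphism ξ of the group ℚ/ℤ such that f(x) = m·ξ(x) for every x ∈ ℚ/ℤ (i.e. f is the composition of an automorphism with multiplication by m); in particular f is surjective. -/
/-!
By Lagrange the kernel of `f`, of order `m`, is killed by `m`; since `ℚ/ℤ` has at most `m`
points of order dividing `m`, the kernel of `f` is exactly the kernel of multiplication by `m`.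
Multiplication by `m` is surjective (`ℚ/ℤ` is divisible), so `f = ξ ∘ (m • ·)` with `ξ` injective.
An injective endomorphism of a torsion group with finite `n`-torsion subgroups permutes each of
them, hence is surjective, so `ξ` is an automorphism.
-/

open Function

theorem AddMonoidHom.surjective_of_injective_of_isAddTorsion {A : Type*} [AddCommGroup A]
    (htors : IsAddTorsion A) (hfin : ∀ n : ℕ, 0 < n → {x : A | n • x = 0}.Finite)
    (g : A →+ A) (hg : Injective g) : Surjective g := by
  intro y
  set n := addOrderOf y
  have hmaps : Set.MapsTo g {x | n • x = 0} {x | n • x = 0} := fun x (hx : n • x = 0) => by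
    simp [← map_nsmul, hx]
  have hbij := ((hfin n (htors y).addOrderOf_pos).injOn_iff_bijOn_of_mapsTo hmaps).mp hg.injOn
  obtain ⟨x, -, rfl⟩ := hbij.surjOn (addOrderOf_nsmul_eq_zero y)
  exact ⟨x, rfl⟩

theorem AddSubgroup.coe_eq_setOf_card_nsmul_eq_zero {G : Type*} [AddGroup G] (H : AddSubgroup G)
    [Finite H] (hle : {x : G | Nat.card H • x = 0}.encard ≤ Nat.card H) :
    (H : Set G) = {x | Nat.card H • x = 0} := by
  have hsub : (H : Set G) ⊆ {x | Nat.card H • x = 0} := fun x hx =>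
    congrArg Subtype.val (card_nsmul_eq_zero' (G := H) (x := ⟨x, hx⟩))
  refine (Set.toFinite _).eq_of_subset_of_encard_le hsub ?_
  rwa [← (Set.toFinite (H : Set G)).cast_ncard_eq, ← Nat.card_coe_set_eq]

theorem AddMonoidHom.exists_injective_comp_eq_of_ker_eq {A B C : Type*} [AddGroup A] [AddGroup B]
    [AddGroup C] (μ : A →+ B) (hμ : Surjective μ) (f : A →+ C) (hker : f.ker = μ.ker) :
    ∃ g : B →+ C, Injective g ∧ ∀ x, f x = g (μ x) := by
  refine ⟨μ.liftOfSurjective hμ ⟨f, hker.ge⟩, ?_, fun x => by simp⟩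
  rw [injective_iff_map_eq_zero]
  intro y hy
  obtain ⟨x, rfl⟩ := hμ y
  rw [liftOfRightInverse_comp_apply] at hy
  rwa [← mem_ker, ← hker]

theorem AddCircle.isAddTorsion_rat (p : ℚ) [Fact (0 < p)] : IsAddTorsion (AddCircle p) := by
  intro x
  induction x using QuotientAddGroup.induction_on with
  | H q => exact isOfFinAddOrder_iff_exists_rat_eq_div.mpr ⟨q / p, by simp⟩

theorem AddCircle.nsmul_surjective_rat (p : ℚ) [Fact (0 < p)] {n : ℕ} (hn : n ≠ 0) :
    Surjective fun x : AddCircle p => n • x := by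
  let := AddGroup.divisibleByNatOfDivisibleByInt (AddCircle p)
  exact DivisibleBy.surjective_smul _ _ hn

/-- A homomorphism `f : ℚ/ℤ → ℚ/ℤ` with finite kernel of cardinality `m` is the
composition of an automorphism of `ℚ/ℤ` with multiplication by `m`; in particular
it is surjective. -/
theorem qz_endomorphism_classification
    (f : AddCircle (1 : ℚ) →+ AddCircle (1 : ℚ))
    (hker : ((f.ker : Set (AddCircle (1 : ℚ)))).Finite)
    (m : ℕ) (hm : m = Nat.card f.ker) :
    1 ≤ m ∧
    (∃ ξ : AddCircle (1 : ℚ) ≃+ AddCircle (1 : ℚ), ∀ x, f x = m • ξ x) ∧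
    Function.Surjective f := by
  have : Finite f.ker := hker.to_subtype
  subst hm
  have hm0 : Nat.card f.ker ≠ 0 := Nat.card_pos.ne'
  have hker_eq : f.ker = (nsmulAddMonoidHom (Nat.card f.ker)).ker :=
    SetLike.coe_injective <| f.ker.coe_eq_setOf_card_nsmul_eq_zero <|
      AddCircle.card_torsion_le_of_isSMulRegular 1 _ hm0 (.of_ne_zero hm0)
  have hμ := AddCircle.nsmul_surjective_rat 1 hm0
  obtain ⟨ξ, hξ_inj, hfξ⟩ := (nsmulAddMonoidHom _).exists_injective_comp_eq_of_ker_eq hμ f hker_eq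
  have hξ_surj : Surjective ξ := ξ.surjective_of_injective_of_isAddTorsion
    (AddCircle.isAddTorsion_rat 1) (fun _ hn => AddCircle.finite_torsion 1 hn) hξ_inj
  have hf : ∀ x, f x = Nat.card f.ker • ξ x := fun x => by
    rw [hfξ, nsmulAddMonoidHom_apply, map_nsmul]
  refine ⟨Nat.one_le_iff_ne_zero.mpr hm0, ⟨.ofBijective ξ ⟨hξ_inj, hξ_surj⟩, hf⟩, ?_⟩
  simpa only [funext hf, comp_def] using hμ.comp hξ_surj
end

section
/- Let k be a field, n ≥ 1 an integer, s ∈ k nonzero, and suppose r : Fin n → k is injective with r(i)^n = s for every i (i.e. the polynomial X^n − s has n distinct roots in k). Let V be a k-vector space. Define k-linear endomorphisms T and D of the n-fold product Fin n → V by: (T v)(0) = s·v(n−1) and (T v)(i+1) = v(i) for 0 ≤ i ≤ n−2; and (D v)(i) = r(i)·v(i). Then T and D are conjugate: there exists a k-linear automorphism P of (Fin n → V) with T = P ∘ D ∘ P⁻¹. -/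
/-!
For each root `c` of `X^n - s` the vector `(c^(n-1) x, …, c x, x)` is an eigenvector of the
Verschiebung operator with eigenvalue `c`. These are the columns of the Vandermonde matrix of the
roots with its rows reversed, which is invertible because the roots are distinct; letting it act on
`V^n` (through the scoped `Matrix.Module` action) gives the conjugating automorphism.
-/

open Matrix Matrix.Module

theorem apply_pow_rev_smul_eq_smul_self {k V : Type*} [Monoid k] [MulAction k V] {n : ℕ} {s : k}
    (T : (Fin n → V) → (Fin n → V)) (hT0 : ∀ v (j : Fin n), (j : ℕ) = 0 → T v j = s • v j.rev)
    (hTsucc : ∀ v (i j : Fin n), (j : ℕ) = i + 1 → T v j = v i)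
    {c : k} (hc : c ^ n = s) (x : V) :
    T (fun j => c ^ (j.rev : ℕ) • x) = c • fun j => c ^ (j.rev : ℕ) • x := by
  funext ⟨j, hj⟩
  cases j with
  | zero =>
    rw [hT0 _ _ rfl, ← hc, Pi.smul_apply, smul_smul, smul_smul]
    simp only [Fin.val_rev, ← pow_succ', ← pow_add]
    congr 2
    omega
  | succ i =>
    rw [hTsucc _ ⟨i, by omega⟩ _ rfl, Pi.smul_apply, smul_smul, ← pow_succ']
    simp only [Fin.val_rev]
    congr 2
    omega

section

variable {k : Type*} [CommRing k] {n : ℕ}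

def revVandermonde (r : Fin n → k) : Matrix (Fin n) (Fin n) k :=
  (vandermonde r)ᵀ.submatrix Fin.rev id

@[simp]
theorem revVandermonde_apply (r : Fin n → k) (i j : Fin n) :
    revVandermonde r i j = r j ^ (i.rev : ℕ) := rfl

theorem apply_revVandermonde_smul {V : Type*} [AddCommGroup V] [Module k V] {s : k}
    (r : Fin n → k) (hroot : ∀ i, r i ^ n = s) (T : (Fin n → V) →ₗ[k] (Fin n → V))
    (hT0 : ∀ v (j : Fin n), (j : ℕ) = 0 → T v j = s • v j.rev)
    (hTsucc : ∀ v (i j : Fin n), (j : ℕ) = i + 1 → T v j = v i) (u : Fin n → V) :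
    T (revVandermonde r • u) = revVandermonde r • fun i => r i • u i := by
  simp only [smul_def', map_sum, revVandermonde_apply,
    apply_pow_rev_smul_eq_smul_self T hT0 hTsucc (hroot _)]
  congr with i j
  simp [smul_smul, mul_comm]

end

theorem isUnit_revVandermonde {k : Type*} [Field k] {n : ℕ} {r : Fin n → k}
    (hr : Function.Injective r) :
    IsUnit (revVandermonde r) := by
  rw [isUnit_iff_isUnit_det]
  change IsUnit ((vandermonde r)ᵀ.submatrix Fin.revPerm id).det
  rw [det_permute, det_transpose]
  exact ((Equiv.Perm.sign _).isUnit.map (Int.castRingHom k)).mul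
    (det_vandermonde_ne_zero_iff.mpr hr).isUnit

/-- If `X^n - s` has `n` distinct roots `r 0, …, r (n-1)` in `k`, then the Verschiebung
operator `𝕍ₙ(s·id_V)` on `V^{⊕n}` (with `s·id_V` in the top-right corner and identities
on the subdiagonal) is conjugate to the diagonal operator with entries `r i · id_V`. -/
theorem verschiebung_diagonalization
    (k : Type*) [Field k] (V : Type*) [AddCommGroup V] [Module k V]
    (n : ℕ) (hn : 1 ≤ n) (s : k)
    (r : Fin n → k) (hr : Function.Injective r) (hroot : ∀ i, r i ^ n = s)
    (T D : (Fin n → V) →ₗ[k] (Fin n → V))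
    (hT0 : ∀ v : Fin n → V, T v ⟨0, hn⟩ = s • v ⟨n - 1, by omega⟩)
    (hTsucc : ∀ (v : Fin n → V) (i : ℕ) (h : i + 1 < n),
        T v ⟨i + 1, h⟩ = v ⟨i, by omega⟩)
    (hD : ∀ (v : Fin n → V) (i : Fin n), D v i = r i • v i) :
    ∃ P : (Fin n → V) ≃ₗ[k] (Fin n → V), ∀ v : Fin n → V, T v = P (D (P.symm v)) := by
  have hT0' : ∀ v (j : Fin n), (j : ℕ) = 0 → T v j = s • v j.rev := fun v j hj => by
    obtain rfl : j = ⟨0, hn⟩ := Fin.ext hj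
    exact hT0 v
  have hTsucc' : ∀ v (i j : Fin n), (j : ℕ) = i + 1 → T v j = v i := fun v i j hj => by
    rw [show j = ⟨i + 1, by omega⟩ from Fin.ext hj]
    exact hTsucc v i _
  obtain ⟨M, hM⟩ := isUnit_revVandermonde hr
  refine ⟨DistribMulAction.toLinearEquiv k (Fin n → V) M, fun v => ?_⟩
  obtain ⟨u, rfl⟩ : ∃ u, M • u = v := ⟨M⁻¹ • v, smul_inv_smul M v⟩
  rw [DistribMulAction.toLinearEquiv_symm_apply, inv_smul_smul, show D u = _ from funext (hD u)]
  simpa [Units.smul_def, hM] using apply_revVandermonde_smul r hroot T hT0' hTsucc' u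
end

section
/- Let J be a nonempty finite set and let q_j > 1 be real numbers for j ∈ J. Let α : ℕ≥1 → ℕ≥1 satisfy α(n) ≥ 1 and α(nm) = α(n)·α(m) for all n, m ≥ 1, let g : ℕ≥1 → ℝ satisfy g(n) > 0 and g(nm) = g(n)·g(m) for all n, m ≥ 1, and let β > 0 be real. Then the family f(n, j, k) = q_j^{−k·α(n)·β} · g(n)^{−β}, indexed by (n, j, k) ∈ ℕ≥1 × J × ℕ, is summable if and only if the family n ↦ g(n)^{−β} (n ≥ 1) is summable; and in that case its sum equals ∑_{n≥1} ∑_{j∈J} g(n)^{−β} / (1 − q_j^{−α(n)·β}). -/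
/-!
With `r n j = q_j ^ (-α(n)β)` the family is `r n j ^ k · g(n)^{-β}`, a geometric series in `k`.
Since `α(n) ≥ 1`, all ratios are at most `max_j q_j^{-β} < 1`, so the family is dominated by
`g(n)^{-β}` times a summable family on `J × ℕ`; conversely its terms with `k = 0` are the
`g(n)^{-β}`. Summing the geometric series on each fibre gives the formula.
-/

open Real

section GeometricFibres

variable {ι J : Type*} {a : ι → ℝ} {r : ι → J → ℝ}

theorem summable_pow_mul_iff [Finite J] [Nonempty J] (ha : 0 ≤ a) (hr : 0 ≤ r) {M : ℝ}
    (hM0 : 0 ≤ M) (hM : M < 1) (hrM : ∀ i j, r i j ≤ M) :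
    Summable (fun x : ι × J × ℕ => r x.1 x.2.1 ^ x.2.2 * a x.1) ↔ Summable a := by
  obtain ⟨j₀⟩ := ‹Nonempty J›
  constructor
  · intro hs
    have hinj : Function.Injective fun i : ι => (i, j₀, 0) := fun _ _ h => congrArg Prod.fst h
    simpa [Function.comp_def] using hs.comp_injective hinj
  · intro hs
    have hgeom : Summable fun p : J × ℕ => M ^ p.2 := by
      simpa using (Summable.of_finite (f := fun _ : J => (1 : ℝ))).mul_of_nonneg
        (summable_geometric_of_lt_one hM0 hM) (fun _ => zero_le_one) (fun _ => pow_nonneg hM0 _)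
    refine (hs.mul_of_nonneg hgeom ha fun _ => pow_nonneg hM0 _).of_nonneg_of_le
      (fun x => mul_nonneg (pow_nonneg (hr _ _) _) (ha _)) fun ⟨i, j, k⟩ => ?_
    rw [mul_comm (a i)]
    exact mul_le_mul_of_nonneg_right (pow_le_pow_left₀ (hr i j) (hrM i j) k) (ha i)

theorem tsum_pow_mul_eq [Fintype J] (hr : 0 ≤ r) (hr1 : ∀ i j, r i j < 1)
    (hs : Summable fun x : ι × J × ℕ => r x.1 x.2.1 ^ x.2.2 * a x.1) :
    ∑' x : ι × J × ℕ, r x.1 x.2.1 ^ x.2.2 * a x.1 = ∑' i, ∑ j, a i / (1 - r i j) := by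
  rw [hs.tsum_prod]
  refine tsum_congr fun i => ?_
  rw [(hs.prod_factor i).tsum_prod, tsum_fintype]
  refine Finset.sum_congr rfl fun j _ => ?_
  change ∑' k, r i j ^ k * a i = _
  rw [tsum_mul_right, tsum_geometric_of_lt_one (hr i j) (hr1 i j), div_eq_inv_mul]

end GeometricFibres

theorem rpow_neg_natCast_mul {q : ℝ} (hq : 0 ≤ q) (k : ℕ) (t : ℝ) :
    q ^ (-(k * t)) = (q ^ (-t)) ^ k := by
  rw [← rpow_natCast, ← rpow_mul hq]
  ring_nf

theorem rpow_neg_mul_le_rpow_neg {p q m t : ℝ} (hp : 0 < p) (hpq : p ≤ q) (hq : 1 ≤ q)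
    (hm : 1 ≤ m) (ht : 0 ≤ t) : q ^ (-(m * t)) ≤ p ^ (-t) :=
  (rpow_le_rpow_of_exponent_le hq (neg_le_neg (le_mul_of_one_le_left ht hm))).trans
    (rpow_le_rpow_of_nonpos hp hpq (neg_nonpos.2 ht))

theorem partition_function_finite_progressions_general
    (J : Type*) [Fintype J] [Nonempty J]
    (q : J → ℝ) (hq : ∀ j, 1 < q j)
    (α : ℕ → ℕ) (hα1 : ∀ n, 1 ≤ n → 1 ≤ α n)
    (g : ℕ → ℝ) (hg : ∀ n, 1 ≤ n → 0 < g n)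
    (β : ℝ) (hβ : 0 < β) :
    (Summable (fun x : {n : ℕ // 1 ≤ n} × J × ℕ =>
        q x.2.1 ^ (-((x.2.2 : ℝ) * ((α x.1 : ℕ) : ℝ) * β)) * g x.1 ^ (-β)) ↔
      Summable (fun n : {n : ℕ // 1 ≤ n} => g n ^ (-β))) ∧
    (Summable (fun n : {n : ℕ // 1 ≤ n} => g n ^ (-β)) →
      ∑' x : {n : ℕ // 1 ≤ n} × J × ℕ,
          q x.2.1 ^ (-((x.2.2 : ℝ) * ((α x.1 : ℕ) : ℝ) * β)) * g x.1 ^ (-β)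
        = ∑' n : {n : ℕ // 1 ≤ n}, ∑ j : J,
            g n ^ (-β) / (1 - q j ^ (-(((α n : ℕ) : ℝ) * β)))) := by
  have hq0 j : 0 < q j := one_pos.trans (hq j)
  have ha : 0 ≤ fun n : {n : ℕ // 1 ≤ n} => g n ^ (-β) :=
    fun n => (rpow_pos_of_pos (hg n n.2) _).le
  have hr : 0 ≤ fun (n : {n : ℕ // 1 ≤ n}) j => q j ^ (-(((α n : ℕ) : ℝ) * β)) :=
    fun n j => (rpow_pos_of_pos (hq0 j) _).le
  obtain ⟨j₀, hj₀⟩ := Finite.exists_min q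
  have hrM (n : {n : ℕ // 1 ≤ n}) (j : J) :
      q j ^ (-(((α n : ℕ) : ℝ) * β)) ≤ q j₀ ^ (-β) :=
    rpow_neg_mul_le_rpow_neg (hq0 j₀) (hj₀ j) (hq j).le (by exact_mod_cast hα1 n n.2) hβ.le
  have hfamily : (fun x : {n : ℕ // 1 ≤ n} × J × ℕ =>
      q x.2.1 ^ (-((x.2.2 : ℝ) * ((α x.1 : ℕ) : ℝ) * β)) * g x.1 ^ (-β)) =
      fun x => (q x.2.1 ^ (-(((α x.1 : ℕ) : ℝ) * β))) ^ x.2.2 * g x.1 ^ (-β) := by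
    funext x
    rw [mul_assoc, rpow_neg_natCast_mul (hq0 _).le]
  have hM : q j₀ ^ (-β) < 1 := rpow_lt_one_of_one_lt_of_neg (hq j₀) (neg_lt_zero.2 hβ)
  have hiff := summable_pow_mul_iff ha hr (rpow_pos_of_pos (hq0 j₀) _).le hM hrM
  rw [hfamily]
  exact ⟨hiff, fun hs => tsum_pow_mul_eq (a := fun n : {n : ℕ // 1 ≤ n} => g n ^ (-β)) hr
    (fun n j => (hrM n j).trans_lt hM) (hiff.2 hs)⟩

/-- Partition function for a norm group which is a finite union of geometric
progressions: the family `(n,j,k) ↦ q_j^{-k·α(n)·β}·g(n)^{-β}` is summable exactly when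
`n ↦ g(n)^{-β}` is, and its sum is `∑_n ∑_j g(n)^{-β}/(1 - q_j^{-α(n)β})`. -/
theorem partition_function_finite_progressions
    (J : Type*) [Fintype J] [Nonempty J]
    (q : J → ℝ) (hq : ∀ j, 1 < q j)
    (α : ℕ → ℕ) (hα1 : ∀ n, 1 ≤ n → 1 ≤ α n)
    (hαmul : ∀ n m, 1 ≤ n → 1 ≤ m → α (n * m) = α n * α m)
    (g : ℕ → ℝ) (hg : ∀ n, 1 ≤ n → 0 < g n)
    (hgmul : ∀ n m, 1 ≤ n → 1 ≤ m → g (n * m) = g n * g m)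
    (β : ℝ) (hβ : 0 < β) :
    (Summable (fun x : {n : ℕ // 1 ≤ n} × J × ℕ =>
        q x.2.1 ^ (-((x.2.2 : ℝ) * ((α x.1 : ℕ) : ℝ) * β)) * g x.1 ^ (-β)) ↔
      Summable (fun n : {n : ℕ // 1 ≤ n} => g n ^ (-β))) ∧
    (Summable (fun n : {n : ℕ // 1 ≤ n} => g n ^ (-β)) →
      ∑' x : {n : ℕ // 1 ≤ n} × J × ℕ,
          q x.2.1 ^ (-((x.2.2 : ℝ) * ((α x.1 : ℕ) : ℝ) * β)) * g x.1 ^ (-β)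
        = ∑' n : {n : ℕ // 1 ≤ n}, ∑ j : J,
            g n ^ (-β) / (1 - q j ^ (-(((α n : ℕ) : ℝ) * β)))) :=
  partition_function_finite_progressions_general J q hq α hα1 g hg β hβ
end

section
/- Let α : ℕ≥1 → ℕ≥1 satisfy α(n) ≥ 1 and α(nm) = α(n)·α(m) for all n, m ≥ 1, let g : ℕ≥1 → ℝ satisfy g(n) > 0 and g(nm) = g(n)·g(m) for all n, m ≥ 1, and let β > 3/2 be a real number such that the family n ↦ g(n)^{−β} (n ≥ 1) is summable. Then the family (n, m) ↦ g(n)^{−β} · m^{−β·α(n)}, indexed by (n, m) ∈ ℕ≥1 × ℕ≥1, is summable, and its sum equals ∑_{n≥1} g(n)^{−β} · ζ(β·α(n)). -/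
/-!
Since `α(n) ≥ 1` and `β > 1`, each term is dominated by `g(n)^{-β} · m^{-β}`, a product of two
summable nonnegative families; so the double family is summable and Fubini for `tsum` splits the
sum over `m` off each `n`, leaving `∑_m m^{-β·α(n)} = ζ(β·α(n))`.
-/

open Real

lemma summable_nat_pos_rpow_neg {s : ℝ} (hs : 1 < s) :
    Summable (fun m : {m : ℕ // 1 ≤ m} => ((m : ℕ) : ℝ) ^ (-s)) :=
  (Real.summable_nat_rpow.mpr (by linarith)).subtype _

lemma summable_mul_rpow_neg_of_le {ι : Type*} {w : ι → ℝ} (hw0 : ∀ i, 0 ≤ w i)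
    (hw : Summable w) {s : ι → ℝ} {σ : ℝ} (hσ : 1 < σ) (hs : ∀ i, σ ≤ s i) :
    Summable (fun x : ι × {m : ℕ // 1 ≤ m} => w x.1 * ((x.2 : ℕ) : ℝ) ^ (-s x.1)) := by
  have hm0 : ∀ m : {m : ℕ // 1 ≤ m}, (0 : ℝ) ≤ (m : ℕ) := fun m => Nat.cast_nonneg _
  have hdom : Summable (fun x : ι × {m : ℕ // 1 ≤ m} => w x.1 * ((x.2 : ℕ) : ℝ) ^ (-σ)) :=
    hw.mul_of_nonneg (summable_nat_pos_rpow_neg hσ) hw0 fun m => rpow_nonneg (hm0 m) _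
  refine hdom.of_nonneg_of_le (fun x => mul_nonneg (hw0 _) (rpow_nonneg (hm0 _) _)) fun x => ?_
  refine mul_le_mul_of_nonneg_left ?_ (hw0 _)
  exact rpow_le_rpow_of_exponent_le (by exact_mod_cast x.2.2) (neg_le_neg (hs x.1))

lemma tsum_prod_mul_left {ι κ : Type*} {w : ι → ℝ} {f : ι → κ → ℝ}
    (hf : Summable (fun x : ι × κ => w x.1 * f x.1 x.2)) :
    ∑' x : ι × κ, w x.1 * f x.1 x.2 = ∑' i, w i * ∑' k, f i k := by
  rw [hf.tsum_prod' hf.prod_factor]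
  exact tsum_congr fun i => tsum_mul_left (a := w i) (f := f i)

theorem partition_function_zeta_general
    (α : ℕ → ℕ) (hα1 : ∀ n, 1 ≤ n → 1 ≤ α n)
    (g : ℕ → ℝ) (hg : ∀ n, 1 ≤ n → 0 < g n)
    (β : ℝ) (hβ : (3 : ℝ) / 2 < β)
    (hsum : Summable (fun n : {n : ℕ // 1 ≤ n} => g n ^ (-β))) :
    Summable (fun x : {n : ℕ // 1 ≤ n} × {m : ℕ // 1 ≤ m} =>
        g x.1 ^ (-β) * ((x.2 : ℕ) : ℝ) ^ (-(β * ((α x.1 : ℕ) : ℝ)))) ∧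
    ∑' x : {n : ℕ // 1 ≤ n} × {m : ℕ // 1 ≤ m},
        g x.1 ^ (-β) * ((x.2 : ℕ) : ℝ) ^ (-(β * ((α x.1 : ℕ) : ℝ)))
      = ∑' n : {n : ℕ // 1 ≤ n},
          g n ^ (-β) * ∑' m : {m : ℕ // 1 ≤ m}, ((m : ℕ) : ℝ) ^ (-(β * ((α n : ℕ) : ℝ))) := by
  have hexp : ∀ n : {n : ℕ // 1 ≤ n}, β ≤ β * ((α n : ℕ) : ℝ) := fun n =>
    le_mul_of_one_le_right (by linarith) (by exact_mod_cast hα1 n n.2)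
  have hS : Summable (fun x : {n : ℕ // 1 ≤ n} × {m : ℕ // 1 ≤ m} =>
      g x.1 ^ (-β) * ((x.2 : ℕ) : ℝ) ^ (-(β * ((α x.1 : ℕ) : ℝ)))) :=
    summable_mul_rpow_neg_of_le (w := fun n : {n : ℕ // 1 ≤ n} => g n ^ (-β))
      (s := fun n => β * ((α n : ℕ) : ℝ)) (fun n => rpow_nonneg (hg n n.2).le _) hsum
      (by linarith) hexp
  exact ⟨hS, tsum_prod_mul_left (w := fun n : {n : ℕ // 1 ≤ n} => g n ^ (-β))
    (f := fun n (m : {m : ℕ // 1 ≤ m}) => ((m : ℕ) : ℝ) ^ (-(β * ((α n : ℕ) : ℝ)))) hS⟩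

/-- Partition function for an infinite union of geometric progressions with
`h(λ_r) = p_r`: for `β > 3/2` with `∑ g(n)^{-β}` summable, the family
`(n,m) ↦ g(n)^{-β}·m^{-β·α(n)}` is summable, with sum `∑_n g(n)^{-β}·ζ(β·α(n))`. -/
theorem partition_function_zeta
    (α : ℕ → ℕ) (hα1 : ∀ n, 1 ≤ n → 1 ≤ α n)
    (hαmul : ∀ n m, 1 ≤ n → 1 ≤ m → α (n * m) = α n * α m)
    (g : ℕ → ℝ) (hg : ∀ n, 1 ≤ n → 0 < g n)
    (hgmul : ∀ n m, 1 ≤ n → 1 ≤ m → g (n * m) = g n * g m)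
    (β : ℝ) (hβ : (3 : ℝ) / 2 < β)
    (hsum : Summable (fun n : {n : ℕ // 1 ≤ n} => g n ^ (-β))) :
    Summable (fun x : {n : ℕ // 1 ≤ n} × {m : ℕ // 1 ≤ m} =>
        g x.1 ^ (-β) * ((x.2 : ℕ) : ℝ) ^ (-(β * ((α x.1 : ℕ) : ℝ)))) ∧
    ∑' x : {n : ℕ // 1 ≤ n} × {m : ℕ // 1 ≤ m},
        g x.1 ^ (-β) * ((x.2 : ℕ) : ℝ) ^ (-(β * ((α x.1 : ℕ) : ℝ)))
      = ∑' n : {n : ℕ // 1 ≤ n},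
          g n ^ (-β) * ∑' m : {m : ℕ // 1 ≤ m}, ((m : ℕ) : ℝ) ^ (-(β * ((α n : ℕ) : ℝ))) :=
  partition_function_zeta_general α hα1 g hg β hβ hsum
end

section
/- Let q ≥ 2 be a natural number, let g : ℕ≥1 → ℝ satisfy g(n) > 0 and g(nm) = g(n)·g(m) for all n, m ≥ 1, and let β > 0 be real. Then: (a) the family (n, k) ↦ q^{−k·n·β/2} · g(n)^{−β}, indexed by (n, k) ∈ ℕ≥1 × ℕ, is summable if and only if n ↦ g(n)^{−β} (n ≥ 1) is summable, and in that case its sum equals ∑_{n≥1} g(n)^{−β} / (1 − q^{−n·β/2}); (b) if moreover g(n) = n for all n and β > 1, then this sum equals ∑_{k≥0} ∑_{n≥1} (q^{−k·β/2})^n · n^{−β}, i.e. the series of polylogarithms ∑_{k≥0} Li_β(q^{−kβ/2}). -/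
/-!
Summing the geometric series in `k` first turns the double family into
`n ↦ g(n)^{-β} / (1 - r_n)` with `r_n = q^{-nβ/2}`; since `0 ≤ r_n ≤ q^{-β/2} < 1` uniformly,
the factor `(1 - r_n)⁻¹` lies in `[1, (1 - q^{-β/2})⁻¹]`, so summability is that of
`n ↦ g(n)^{-β}`. For `g(n) = n` and `β > 1` the family is summable, and summing over `n` first
gives the polylogarithms, because `q^{-knβ/2} = (q^{-kβ/2})^n`.
-/

open Real

lemma tsum_geometric_mul_of_lt_one {r : ℝ} (hr₀ : 0 ≤ r) (hr₁ : r < 1) (a : ℝ) :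
    ∑' k : ℕ, r ^ k * a = a / (1 - r) := by
  rw [tsum_mul_right, tsum_geometric_of_lt_one hr₀ hr₁, inv_mul_eq_div]

section GeometricFibres

variable {ι : Type*} {a r : ι → ℝ}

lemma summable_div_one_sub_iff (ha : ∀ i, 0 ≤ a i) (hr : ∀ i, 0 ≤ r i) {c : ℝ}
    (hrc : ∀ i, r i ≤ c) (hc : c < 1) :
    Summable (fun i => a i / (1 - r i)) ↔ Summable a := by
  have hpos : ∀ i, 0 < 1 - r i := fun i => by linarith [hrc i]
  constructor
  · refine fun h => h.of_nonneg_of_le ha fun i => ?_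
    rw [le_div_iff₀ (hpos i)]
    nlinarith [ha i, hr i]
  · refine fun h => (h.mul_right (1 - c)⁻¹).of_nonneg_of_le
      (fun i => div_nonneg (ha i) (hpos i).le) fun i => ?_
    exact mul_le_mul_of_nonneg_left (inv_anti₀ (by linarith) (by linarith [hrc i])) (ha i)

lemma summable_prod_geometric_mul_iff (ha : ∀ i, 0 ≤ a i) (hr : ∀ i, 0 ≤ r i) {c : ℝ}
    (hrc : ∀ i, r i ≤ c) (hc : c < 1) :
    Summable (fun x : ι × ℕ => r x.1 ^ x.2 * a x.1) ↔ Summable a := by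
  have hr₁ : ∀ i, r i < 1 := fun i => (hrc i).trans_lt hc
  rw [summable_prod_of_nonneg fun x => mul_nonneg (pow_nonneg (hr x.1) _) (ha x.1),
    ← summable_div_one_sub_iff ha hr hrc hc]
  simp only [tsum_geometric_mul_of_lt_one (hr _) (hr₁ _)]
  exact and_iff_right fun i => (summable_geometric_of_lt_one (hr i) (hr₁ i)).mul_right (a i)

lemma tsum_prod_geometric_mul (hr₀ : ∀ i, 0 ≤ r i) (hr₁ : ∀ i, r i < 1)
    (h : Summable fun x : ι × ℕ => r x.1 ^ x.2 * a x.1) :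
    ∑' x : ι × ℕ, r x.1 ^ x.2 * a x.1 = ∑' i, a i / (1 - r i) := by
  rw [h.tsum_prod]
  exact tsum_congr fun i => tsum_geometric_mul_of_lt_one (hr₀ i) (hr₁ i) (a i)

end GeometricFibres

lemma rpow_neg_mul_mul_div_two {q : ℝ} (hq : 0 ≤ q) (k n : ℕ) (β : ℝ) :
    q ^ (-((k : ℝ) * n * β / 2)) = (q ^ (-((n : ℝ) * β / 2))) ^ k := by
  rw [← rpow_mul_natCast hq]
  congr 1
  ring

lemma rpow_neg_mul_div_two_le {q β : ℝ} (hq : 1 ≤ q) (hβ : 0 ≤ β) {n : ℕ} (hn : 1 ≤ n) :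
    q ^ (-((n : ℝ) * β / 2)) ≤ q ^ (-(β / 2)) := by
  have hn' : (1 : ℝ) ≤ n := Nat.one_le_cast.mpr hn
  exact rpow_le_rpow_of_exponent_le hq (by nlinarith)

theorem partition_function_weil_numbers_general
    (q : ℕ) (hq : 2 ≤ q)
    (g : ℕ → ℝ) (hg : ∀ n, 1 ≤ n → 0 < g n)
    (β : ℝ) (hβ : 0 < β) :
    ((Summable (fun x : {n : ℕ // 1 ≤ n} × ℕ =>
          (q : ℝ) ^ (-((x.2 : ℝ) * ((x.1 : ℕ) : ℝ) * β / 2)) * g x.1 ^ (-β)) ↔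
        Summable (fun n : {n : ℕ // 1 ≤ n} => g n ^ (-β))) ∧
      (Summable (fun n : {n : ℕ // 1 ≤ n} => g n ^ (-β)) →
        ∑' x : {n : ℕ // 1 ≤ n} × ℕ,
            (q : ℝ) ^ (-((x.2 : ℝ) * ((x.1 : ℕ) : ℝ) * β / 2)) * g x.1 ^ (-β)
          = ∑' n : {n : ℕ // 1 ≤ n},
              g n ^ (-β) / (1 - (q : ℝ) ^ (-(((n : ℕ) : ℝ) * β / 2))))) ∧
    ((∀ n, 1 ≤ n → g n = n) → 1 < β →
      ∑' x : {n : ℕ // 1 ≤ n} × ℕ,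
          (q : ℝ) ^ (-((x.2 : ℝ) * ((x.1 : ℕ) : ℝ) * β / 2)) * g x.1 ^ (-β)
        = ∑' k : ℕ, ∑' n : {n : ℕ // 1 ≤ n},
            ((q : ℝ) ^ (-((k : ℝ) * β / 2))) ^ ((n : ℕ)) * ((n : ℕ) : ℝ) ^ (-β)) := by
  have hq₁ : (1 : ℝ) < q := Nat.one_lt_cast.mpr hq
  have hq₀ : (0 : ℝ) ≤ q := by positivity
  simp_rw [rpow_neg_mul_mul_div_two hq₀]
  set r : {n : ℕ // 1 ≤ n} → ℝ := fun n => (q : ℝ) ^ (-(((n : ℕ) : ℝ) * β / 2))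
  have hr₀ : ∀ n, 0 ≤ r n := fun n => rpow_nonneg hq₀ _
  have hr_le : ∀ n, r n ≤ (q : ℝ) ^ (-(β / 2)) := fun n =>
    rpow_neg_mul_div_two_le hq₁.le hβ.le n.2
  have hc : (q : ℝ) ^ (-(β / 2)) < 1 := rpow_lt_one_of_one_lt_of_neg hq₁ (by linarith)
  set a : {n : ℕ // 1 ≤ n} → ℝ := fun n => g n ^ (-β)
  have hiff := summable_prod_geometric_mul_iff (a := a) (fun n => rpow_nonneg (hg n n.2).le (-β))
    hr₀ hr_le hc
  refine ⟨⟨hiff, fun h => ?_⟩, fun hgn hβ₁ => ?_⟩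
  · exact tsum_prod_geometric_mul (a := a) hr₀ (fun n => (hr_le n).trans_lt hc) (hiff.2 h)
  have ha_eq : a = fun n : {n : ℕ // 1 ≤ n} => ((n : ℕ) : ℝ) ^ (-β) :=
    funext fun n => congrArg (· ^ (-β)) (hgn n n.2)
  have ha : Summable a := by
    rw [ha_eq]
    exact (summable_nat_rpow.mpr (neg_lt_neg hβ₁)).comp_injective Subtype.val_injective
  have hsum := hiff.2 ha
  rw [hsum.tsum_prod, ← hsum.tsum_comm (f := fun n k => r n ^ k * a n), ha_eq]
  refine tsum_congr fun k => tsum_congr fun n => ?_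
  rw [← rpow_neg_mul_mul_div_two hq₀, mul_comm (k : ℝ), rpow_neg_mul_mul_div_two hq₀]

/-- Partition function of the Weil-number QSM-system: (a) the family
`(n,k) ↦ q^{-k·n·β/2}·g(n)^{-β}` is summable iff `n ↦ g(n)^{-β}` is, with sum
`∑_n g(n)^{-β}/(1 - q^{-nβ/2})`; (b) for `g(n) = n` and `β > 1` this sum is the series
of polylogarithms `∑_{k≥0} Li_β(q^{-kβ/2})`. -/
theorem partition_function_weil_numbers
    (q : ℕ) (hq : 2 ≤ q)
    (g : ℕ → ℝ) (hg : ∀ n, 1 ≤ n → 0 < g n)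
    (hgmul : ∀ n m, 1 ≤ n → 1 ≤ m → g (n * m) = g n * g m)
    (β : ℝ) (hβ : 0 < β) :
    ((Summable (fun x : {n : ℕ // 1 ≤ n} × ℕ =>
          (q : ℝ) ^ (-((x.2 : ℝ) * ((x.1 : ℕ) : ℝ) * β / 2)) * g x.1 ^ (-β)) ↔
        Summable (fun n : {n : ℕ // 1 ≤ n} => g n ^ (-β))) ∧
      (Summable (fun n : {n : ℕ // 1 ≤ n} => g n ^ (-β)) →
        ∑' x : {n : ℕ // 1 ≤ n} × ℕ,
            (q : ℝ) ^ (-((x.2 : ℝ) * ((x.1 : ℕ) : ℝ) * β / 2)) * g x.1 ^ (-β)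
          = ∑' n : {n : ℕ // 1 ≤ n},
              g n ^ (-β) / (1 - (q : ℝ) ^ (-(((n : ℕ) : ℝ) * β / 2))))) ∧
    ((∀ n, 1 ≤ n → g n = n) → 1 < β →
      ∑' x : {n : ℕ // 1 ≤ n} × ℕ,
          (q : ℝ) ^ (-((x.2 : ℝ) * ((x.1 : ℕ) : ℝ) * β / 2)) * g x.1 ^ (-β)
        = ∑' k : ℕ, ∑' n : {n : ℕ // 1 ≤ n},
            ((q : ℝ) ^ (-((k : ℝ) * β / 2))) ^ ((n : ℕ)) * ((n : ℕ) : ℝ) ^ (-β)) :=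
  partition_function_weil_numbers_general q hq g hg β hβ
end

section
/- Let q > 1 be a real number and z ∈ ℂ with |z| = 1. Then the quotient (∑_{k≥0} ∑_{n≥1} (z·q^{−k·β/2})^n·n^{−β}) / (∑_{k≥0} ∑_{n≥1} (q^{−k·β/2})^n·n^{−β}), which is defined for every real β > 1, tends to z as β → +∞. Equivalently, lim_{β→∞} (∑_{k≥0} Li_β(z q^{−kβ/2})) / (∑_{k≥0} Li_β(q^{−kβ/2})) = z. -/
/-!
Write `r = q^{-β/2} < 1`, so that the numerator is `∑_k Li_β(z r^k)`. For `β ≥ 2` and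
`|x| ≤ 1` one has `|Li_β(x)| ≤ |x| ζ(2)` and `r^k ≤ q^{-k}`, which gives a summable bound on
the terms independent of `β`. Each `Li_β(x_β)` with `x_β → a` tends to `a`, because the terms
with `n ≥ 2` carry the factor `n^{-β} → 0`; hence the `k`-th term tends to `z` for `k = 0` and
to `0` for `k ≥ 1`. By dominated convergence (Tannery's theorem) the numerator tends to `z`
and, taking `z = 1`, the denominator tends to `1`.
-/

open Filter Topology

noncomputable def polylog (β : ℝ) (x : ℂ) : ℂ :=
  ∑' n : {n : ℕ // 1 ≤ n}, x ^ (n : ℕ) * ((((n : ℕ) : ℝ) ^ (-β) : ℝ) : ℂ)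

lemma summable_rpow_neg_of_one_lt {s : ℝ} (hs : 1 < s) :
    Summable fun n : {n : ℕ // 1 ≤ n} => ((n : ℕ) : ℝ) ^ (-s) :=
  (Real.summable_nat_rpow.mpr (by linarith)).comp_injective Subtype.val_injective

lemma norm_polylog_term_le {β s : ℝ} (hsβ : s ≤ β) {x : ℂ} (hx : ‖x‖ ≤ 1)
    (n : {n : ℕ // 1 ≤ n}) :
    ‖x ^ (n : ℕ) * ((((n : ℕ) : ℝ) ^ (-β) : ℝ) : ℂ)‖ ≤ ‖x‖ * ((n : ℕ) : ℝ) ^ (-s) := by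
  have hn : (1 : ℝ) ≤ (n : ℕ) := by exact_mod_cast n.2
  rw [norm_mul, norm_pow, Complex.norm_real, Real.norm_of_nonneg (by positivity)]
  exact mul_le_mul (pow_le_of_le_one (norm_nonneg x) hx (Nat.one_le_iff_ne_zero.mp n.2))
    (Real.rpow_le_rpow_of_exponent_le hn (neg_le_neg hsβ)) (by positivity) (norm_nonneg x)

lemma norm_polylog_le {β s : ℝ} (hs : 1 < s) (hsβ : s ≤ β) {x : ℂ} (hx : ‖x‖ ≤ 1) :
    ‖polylog β x‖ ≤ ‖x‖ * ∑' n : {n : ℕ // 1 ≤ n}, ((n : ℕ) : ℝ) ^ (-s) :=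
  tsum_of_norm_bounded ((summable_rpow_neg_of_one_lt hs).hasSum.mul_left ‖x‖)
    (norm_polylog_term_le hsβ hx)

lemma tendsto_rpow_neg_of_tendsto_atTop {α : Type*} {l : Filter α} {b : ℝ} (hb : 1 < b)
    {g : α → ℝ} (hg : Tendsto g l atTop) : Tendsto (fun x => b ^ (-g x)) l (𝓝 0) :=
  (tendsto_rpow_atBot_of_base_gt_one b hb).comp (tendsto_neg_atTop_atBot.comp hg)

lemma tendsto_polylog {x : ℝ → ℂ} {a : ℂ} (hx : Tendsto x atTop (𝓝 a))
    (hx1 : ∀ᶠ β in atTop, ‖x β‖ ≤ 1) :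
    Tendsto (fun β => polylog β (x β)) atTop (𝓝 a) := by
  have hlim : ∀ n : {n : ℕ // 1 ≤ n},
      Tendsto (fun β => x β ^ (n : ℕ) * ((((n : ℕ) : ℝ) ^ (-β) : ℝ) : ℂ)) atTop
        (𝓝 (if n = ⟨1, le_rfl⟩ then a else 0)) := by
    rintro ⟨n, hn⟩
    rcases hn.eq_or_lt with rfl | hn2
    · simpa only [if_pos, pow_one, Nat.cast_one, Real.one_rpow, Complex.ofReal_one, mul_one]
        using hx
    · rw [if_neg fun h => hn2.ne' (congrArg Subtype.val h)]
      refine squeeze_zero_norm' ?_ (tendsto_rpow_neg_of_tendsto_atTop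
        (by exact_mod_cast hn2 : (1 : ℝ) < n) tendsto_id)
      filter_upwards [hx1] with β hβ
      exact (norm_polylog_term_le le_rfl hβ ⟨n, hn⟩).trans
        (mul_le_of_le_one_left (by positivity) hβ)
  have hbound : ∀ᶠ β in atTop, ∀ n : {n : ℕ // 1 ≤ n},
      ‖x β ^ (n : ℕ) * ((((n : ℕ) : ℝ) ^ (-β) : ℝ) : ℂ)‖ ≤ ((n : ℕ) : ℝ) ^ (-2 : ℝ) := by
    filter_upwards [hx1, eventually_ge_atTop 2] with β hβ h2β n
    exact (norm_polylog_term_le h2β hβ n).trans (mul_le_of_le_one_left (by positivity) hβ)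
  have := tendsto_tsum_of_dominated_convergence (summable_rpow_neg_of_one_lt one_lt_two)
    hlim hbound
  rwa [tsum_ite_eq] at this

lemma rpow_neg_mul_div_two_le_inv_pow {q β : ℝ} (hq : 1 ≤ q) (hβ : 2 ≤ β) (k : ℕ) :
    q ^ (-((k : ℝ) * β / 2)) ≤ q⁻¹ ^ k := by
  rw [inv_pow, ← Real.rpow_natCast, ← Real.rpow_neg (by linarith)]
  exact Real.rpow_le_rpow_of_exponent_le hq (by nlinarith [(k.cast_nonneg : (0 : ℝ) ≤ k)])

lemma tendsto_tsum_polylog_geometric {q : ℝ} (hq : 1 < q) {z : ℂ} (hz : ‖z‖ ≤ 1) :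
    Tendsto (fun β : ℝ => ∑' k : ℕ, polylog β (z * ((q ^ (-((k : ℝ) * β / 2)) : ℝ) : ℂ)))
      atTop (𝓝 z) := by
  have hq_inv : q⁻¹ < 1 := inv_lt_one_of_one_lt₀ hq
  have harg : ∀ᶠ β in atTop, ∀ k : ℕ, ‖z * ((q ^ (-((k : ℝ) * β / 2)) : ℝ) : ℂ)‖ ≤ q⁻¹ ^ k := by
    filter_upwards [eventually_ge_atTop 2] with β hβ k
    rw [norm_mul, Complex.norm_real, Real.norm_of_nonneg (by positivity)]
    exact mul_le_of_le_one_left (by positivity) hz |>.trans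
      (rpow_neg_mul_div_two_le_inv_pow hq.le hβ k)
  have harg_le_one : ∀ᶠ β in atTop, ∀ k : ℕ,
      ‖z * ((q ^ (-((k : ℝ) * β / 2)) : ℝ) : ℂ)‖ ≤ 1 :=
    harg.mono fun β h k => (h k).trans (pow_le_one₀ (by positivity) hq_inv.le)
  have hlim : ∀ k : ℕ, Tendsto (fun β : ℝ => polylog β (z * ((q ^ (-((k : ℝ) * β / 2)) : ℝ) : ℂ)))
      atTop (𝓝 (if k = 0 then z else 0)) := by
    intro k
    refine tendsto_polylog ?_ (harg_le_one.mono fun β h => h k)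
    rcases Nat.eq_zero_or_pos k with rfl | hk
    · simp
    · have hr := tendsto_rpow_neg_of_tendsto_atTop hq
        ((tendsto_id.const_mul_atTop (Nat.cast_pos.mpr hk)).atTop_div_const two_pos)
      simpa [hk.ne'] using ((Complex.continuous_ofReal.tendsto 0).comp hr).const_mul z
  have hbound : ∀ᶠ β in atTop, ∀ k : ℕ,
      ‖polylog β (z * ((q ^ (-((k : ℝ) * β / 2)) : ℝ) : ℂ))‖
        ≤ q⁻¹ ^ k * ∑' n : {n : ℕ // 1 ≤ n}, ((n : ℕ) : ℝ) ^ (-2 : ℝ) := by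
    filter_upwards [harg, harg_le_one, eventually_ge_atTop 2] with β hβ hβ1 h2β k
    exact (norm_polylog_le one_lt_two h2β (hβ1 k)).trans
      (mul_le_mul_of_nonneg_right (hβ k) (tsum_nonneg fun _ => by positivity))
  simpa using tendsto_tsum_of_dominated_convergence
    ((summable_geometric_of_lt_one (by positivity) hq_inv).mul_right _) hlim hbound

/-- Zero-temperature limit of the Weil-number Gibbs states: for `q > 1` and `|z| = 1`,
`(∑_k Li_β(z·q^{-kβ/2})) / (∑_k Li_β(q^{-kβ/2})) → z` as `β → ∞`. -/
theorem ground_state_weil_numbers (q : ℝ) (hq : 1 < q) (z : ℂ) (hz : ‖z‖ = 1) :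
    Filter.Tendsto
      (fun β : ℝ =>
        (∑' k : ℕ, ∑' n : {n : ℕ // 1 ≤ n},
            (z * ((q ^ (-((k : ℝ) * β / 2)) : ℝ) : ℂ)) ^ ((n : ℕ))
              * (((((n : ℕ) : ℝ)) ^ (-β) : ℝ) : ℂ)) /
        (((∑' k : ℕ, ∑' n : {n : ℕ // 1 ≤ n},
            (q ^ (-((k : ℝ) * β / 2))) ^ ((n : ℕ)) * (((n : ℕ) : ℝ)) ^ (-β)) : ℝ) : ℂ))
      Filter.atTop (nhds z) := by
  have hnum := tendsto_tsum_polylog_geometric hq hz.le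
  have hden := tendsto_tsum_polylog_geometric hq (z := 1) (by simp)
  have hden_eq : ∀ β : ℝ,
      (((∑' k : ℕ, ∑' n : {n : ℕ // 1 ≤ n},
        (q ^ (-((k : ℝ) * β / 2))) ^ ((n : ℕ)) * (((n : ℕ) : ℝ)) ^ (-β)) : ℝ) : ℂ)
        = ∑' k : ℕ, polylog β (1 * ((q ^ (-((k : ℝ) * β / 2)) : ℝ) : ℂ)) := by
    intro β
    simp only [Complex.ofReal_tsum, polylog, one_mul, Complex.ofReal_mul, Complex.ofReal_pow]
  have hquot := hnum.div hden one_ne_zero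
  rw [div_one] at hquot
  exact hquot.congr fun β => by rw [Pi.div_apply, hden_eq]; rfl
end

section
/- Let z ∈ ℂ with |z| = 1. Then the quotient (∑_{n≥1} z^n·ζ(n·β)·n^{−β}) / (∑_{n≥1} ζ(n·β)·n^{−β}), which is defined for every real β > 3/2, tends to z as β → +∞. -/
/-!
With the weights `w_β(n) = ζ(nβ) n^{-β}` the quotient is `∑ₙ zⁿ w_β(n) / ∑ₙ w_β(n)`. As `β → ∞` the weight `w_β(1) = ζ(β)` tends to `1` while `w_β(n) → 0`
for `n ≥ 2`, and for `β ≥ 2` all weights are dominated by the summable `ζ(2) n^{-2}`. Dominated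
convergence for series then sends the numerator to `z` and the denominator to `1`.
-/

open Filter Topology

namespace GroundState

noncomputable def zetaReal (s : ℝ) : ℝ := ∑' m : {m : ℕ // 1 ≤ m}, ((m : ℕ) : ℝ) ^ (-s)

lemma one_le_coe (m : {m : ℕ // 1 ≤ m}) : (1 : ℝ) ≤ ((m : ℕ) : ℝ) := by exact_mod_cast m.2

lemma rpow_neg_nonneg (m : {m : ℕ // 1 ≤ m}) (s : ℝ) : 0 ≤ ((m : ℕ) : ℝ) ^ (-s) :=
  Real.rpow_nonneg (Nat.cast_nonneg _) _

lemma rpow_neg_le_rpow_neg (m : {m : ℕ // 1 ≤ m}) {s t : ℝ} (hts : t ≤ s) :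
    ((m : ℕ) : ℝ) ^ (-s) ≤ ((m : ℕ) : ℝ) ^ (-t) :=
  Real.rpow_le_rpow_of_exponent_le (one_le_coe m) (neg_le_neg hts)

lemma summable_rpow_neg {s : ℝ} (hs : 1 < s) :
    Summable fun m : {m : ℕ // 1 ≤ m} => ((m : ℕ) : ℝ) ^ (-s) :=
  (Real.summable_nat_rpow.2 (neg_lt_neg hs)).subtype _

lemma tendsto_coe_rpow_neg_atTop (m : {m : ℕ // 1 ≤ m}) :
    Tendsto (fun s : ℝ => ((m : ℕ) : ℝ) ^ (-s)) atTop
      (𝓝 (if m = ⟨1, le_rfl⟩ then 1 else 0)) := by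
  split_ifs with hm
  · subst hm
    simp only [Nat.cast_one, Real.one_rpow]
    exact tendsto_const_nhds
  · have hm : (1 : ℝ) < ((m : ℕ) : ℝ) := by
      have : (m : ℕ) ≠ 1 := fun h => hm (Subtype.ext h)
      exact_mod_cast lt_of_le_of_ne m.2 this.symm
    exact (tendsto_rpow_atBot_of_base_gt_one _ hm).comp tendsto_neg_atTop_atBot

lemma zetaReal_nonneg (s : ℝ) : 0 ≤ zetaReal s := tsum_nonneg fun m => rpow_neg_nonneg m s

lemma zetaReal_le_zetaReal {s t : ℝ} (ht : 1 < t) (hts : t ≤ s) : zetaReal s ≤ zetaReal t :=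
  (summable_rpow_neg (ht.trans_le hts)).tsum_le_tsum (fun m => rpow_neg_le_rpow_neg m hts)
    (summable_rpow_neg ht)

lemma tendsto_zetaReal_atTop : Tendsto zetaReal atTop (𝓝 1) := by
  have h := tendsto_tsum_of_dominated_convergence (summable_rpow_neg one_lt_two)
    tendsto_coe_rpow_neg_atTop <| (eventually_ge_atTop 2).mono fun s hs m => by
      rw [Real.norm_of_nonneg (rpow_neg_nonneg m s)]
      exact rpow_neg_le_rpow_neg m hs
  rwa [tsum_ite_eq] at h

noncomputable def gibbsWeight (β : ℝ) (n : {n : ℕ // 1 ≤ n}) : ℝ :=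
  zetaReal ((n : ℕ) * β) * ((n : ℕ) : ℝ) ^ (-β)

lemma gibbsWeight_nonneg (β : ℝ) (n : {n : ℕ // 1 ≤ n}) : 0 ≤ gibbsWeight β n :=
  mul_nonneg (zetaReal_nonneg _) (rpow_neg_nonneg n β)

lemma gibbsWeight_le {β : ℝ} (hβ : 2 ≤ β) (n : {n : ℕ // 1 ≤ n}) :
    gibbsWeight β n ≤ zetaReal 2 * ((n : ℕ) : ℝ) ^ (-(2 : ℝ)) := by
  have hnβ : 2 ≤ ((n : ℕ) : ℝ) * β := by nlinarith [one_le_coe n]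
  exact mul_le_mul (zetaReal_le_zetaReal one_lt_two hnβ) (rpow_neg_le_rpow_neg n hβ)
    (rpow_neg_nonneg n β) (zetaReal_nonneg 2)

lemma tendsto_gibbsWeight_atTop (n : {n : ℕ // 1 ≤ n}) :
    Tendsto (gibbsWeight · n) atTop (𝓝 (if n = ⟨1, le_rfl⟩ then 1 else 0)) := by
  have hn : (0 : ℝ) < ((n : ℕ) : ℝ) := zero_lt_one.trans_le (one_le_coe n)
  simpa [gibbsWeight] using (tendsto_zetaReal_atTop.comp (tendsto_id.const_mul_atTop hn)).mul
    (tendsto_coe_rpow_neg_atTop n)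

theorem tendsto_tsum_gibbsWeight_smul {E : Type*} [NormedAddCommGroup E] [NormedSpace ℝ E]
    [CompleteSpace E] (c : {n : ℕ // 1 ≤ n} → E) {C : ℝ} (hc : ∀ n, ‖c n‖ ≤ C) :
    Tendsto (fun β => ∑' n, gibbsWeight β n • c n) atTop (𝓝 (c ⟨1, le_rfl⟩)) := by
  have h := tendsto_tsum_of_dominated_convergence
    ((summable_rpow_neg one_lt_two).mul_left (zetaReal 2) |>.mul_right C)
    (fun n => (tendsto_gibbsWeight_atTop n).smul_const (c n))
    ((eventually_ge_atTop 2).mono fun β hβ n => by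
      rw [norm_smul, Real.norm_of_nonneg (gibbsWeight_nonneg β n)]
      exact mul_le_mul (gibbsWeight_le hβ n) (hc n) (norm_nonneg _)
        (mul_nonneg (zetaReal_nonneg 2) (rpow_neg_nonneg n 2)))
  simp only [ite_smul, one_smul, zero_smul] at h
  rwa [tsum_ite_eq] at h

end GroundState

open GroundState

/-- Zero-temperature limit of the Gibbs states of the QSM-system of algebraic numbers:
for `|z| = 1`, `(∑_n zⁿ ζ(nβ) n^{-β}) / (∑_n ζ(nβ) n^{-β}) → z` as `β → ∞`. -/
theorem ground_state_algebraic_numbers (z : ℂ) (hz : ‖z‖ = 1) :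
    Filter.Tendsto
      (fun β : ℝ =>
        (∑' n : {n : ℕ // 1 ≤ n},
            z ^ ((n : ℕ))
              * (((∑' m : {m : ℕ // 1 ≤ m},
                    (((m : ℕ) : ℝ)) ^ (-(((n : ℕ) : ℝ) * β))) : ℝ) : ℂ)
              * (((((n : ℕ) : ℝ)) ^ (-β) : ℝ) : ℂ)) /
        (((∑' n : {n : ℕ // 1 ≤ n},
            (∑' m : {m : ℕ // 1 ≤ m}, (((m : ℕ) : ℝ)) ^ (-(((n : ℕ) : ℝ) * β)))
              * (((n : ℕ) : ℝ)) ^ (-β)) : ℝ) : ℂ))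
      Filter.atTop (nhds z) := by
  have hnum : Tendsto (fun β : ℝ => ∑' n : {n : ℕ // 1 ≤ n},
      z ^ (n : ℕ) * ((zetaReal ((n : ℕ) * β) : ℝ) : ℂ) * ((((n : ℕ) : ℝ) ^ (-β) : ℝ) : ℂ))
      atTop (𝓝 z) := by
    have h := tendsto_tsum_gibbsWeight_smul (fun n => z ^ (n : ℕ)) (C := 1)
      fun n => by rw [norm_pow, hz, one_pow]
    rw [pow_one] at h
    refine h.congr fun β => tsum_congr fun n => ?_
    simp only [gibbsWeight, Complex.real_smul, Complex.ofReal_mul]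
    ring
  have hden : Tendsto (fun β : ℝ => ((∑' n : {n : ℕ // 1 ≤ n},
      zetaReal ((n : ℕ) * β) * ((n : ℕ) : ℝ) ^ (-β) : ℝ) : ℂ)) atTop (𝓝 1) := by
    simpa [gibbsWeight] using
      (tendsto_tsum_gibbsWeight_smul (fun _ => (1 : ℝ)) (C := 1) fun _ => by simp).ofReal
  have hquot := hnum.div hden one_ne_zero
  rwa [div_one] at hquot
end
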